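/- For the GUE kernel, (∂/∂x + ∂/∂y) K_N(x,y) = -(1/(p_{N-1},p_{N-1}))·(ψ_N(x)ψ_{N-1}(y) + ψ_{N-1}(x)ψ_N(y)), where ψ_n(x) = e^{-x²/2}·2^{-n}H_n(x) and K_N(x,y) = Σ_{n=0}^{N-1} ψ_n(x)ψ_n(y)/(p_n,p_n) with (p_n,p_n) = √π·2^{-n}·n!. -/

import Mathlib

open Real Finset

/-- Physicists' Hermite polynomials. -/
noncomputable def physHermite : ℕ → ℝ → ℝ
  | 0 => fun _ => 1
  | 1 => fun x => 2 * x
  | (n + 2) => fun x => 2 * x * physHermite (n + 1) x - 2 * (n + 1) * physHermite n x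

/-- Hermite wave function `ψ_n(x) = e^{-x²/2} 2^{-n} H_n(x)`. -/
noncomputable def psiH (n : ℕ) (x : ℝ) : ℝ :=
  Real.exp (-x ^ 2 / 2) * physHermite n x / 2 ^ n

/-- GUE correlation kernel `K_N(x,y) = Σ_{n<N} ψ_n(x)ψ_n(y) / (√π n!/2ⁿ)`. -/
noncomputable def kerGUE (N : ℕ) (x y : ℝ) : ℝ :=
  ∑ n ∈ Finset.range N, psiH n x * psiH n y / (Real.sqrt Real.pi * (Nat.factorial n) / 2 ^ n)

/-!
The ladder relation `ψ_n' = -ψ_{n+1} + (n/2) ψ_{n-1}` and `(p_n,p_n) = (n/2) (p_{n-1},p_{n-1})`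
make the `n`-th summand of `(∂_x + ∂_y) K_N` equal to `b_{n-1} - b_n`, where
`b_n = (ψ_{n+1}(x)ψ_n(y) + ψ_n(x)ψ_{n+1}(y)) / (p_n,p_n)`; the sum telescopes to `-b_{N-1}`.
-/

/-- The paper's `(p_n, p_n) = ∫ (2⁻ⁿ H_n)² e^{-x²}`. -/
noncomputable def hermiteNormSq (n : ℕ) : ℝ :=
  √π * n.factorial / 2 ^ n

lemma hermiteNormSq_pos (n : ℕ) : 0 < hermiteNormSq n := by
  unfold hermiteNormSq
  have := Nat.factorial_pos n
  positivity

lemma hermiteNormSq_succ (n : ℕ) :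
    hermiteNormSq (n + 1) = (n + 1) / 2 * hermiteNormSq n := by
  simp only [hermiteNormSq, Nat.factorial_succ, Nat.cast_mul, pow_succ]
  push_cast
  field_simp

lemma kerGUE_eq_sum (N : ℕ) (x y : ℝ) :
    kerGUE N x y = ∑ n ∈ range N, psiH n x * psiH n y / hermiteNormSq n :=
  rfl

lemma kerGUE_comm (N : ℕ) (x y : ℝ) : kerGUE N x y = kerGUE N y x := by
  simp only [kerGUE_eq_sum, mul_comm (psiH _ x)]

lemma physHermite_succ (n : ℕ) (x : ℝ) :
    physHermite (n + 1) x = 2 * x * physHermite n x - 2 * n * physHermite (n - 1) x := by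
  cases n <;> simp [physHermite]

lemma hasDerivAt_physHermite (n : ℕ) (x : ℝ) :
    HasDerivAt (physHermite n) (2 * n * physHermite (n - 1) x) x := by
  induction n using Nat.twoStepInduction generalizing x with
  | zero => simpa [physHermite] using hasDerivAt_const x (1 : ℝ)
  | one => simpa [physHermite] using (hasDerivAt_id x).const_mul (2 : ℝ)
  | more n ih₀ ih₁ =>
    refine ((((hasDerivAt_id x).const_mul (2 : ℝ)).mul (ih₁ x)).sub
      ((ih₀ x).const_mul (2 * ((n : ℝ) + 1)))).congr_deriv ?_
    simp only [id_eq, Nat.add_sub_cancel, show n + 2 - 1 = n + 1 from rfl, physHermite_succ n x]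
    push_cast
    ring

lemma hasDerivAt_psiH (n : ℕ) (x : ℝ) :
    HasDerivAt (psiH n) (-psiH (n + 1) x + n / 2 * psiH (n - 1) x) x := by
  have hgauss : HasDerivAt (fun x : ℝ => exp (-x ^ 2 / 2)) (exp (-x ^ 2 / 2) * -x) x := by
    refine HasDerivAt.exp ((((hasDerivAt_pow 2 x).neg).div_const 2).congr_deriv ?_)
    push_cast
    ring
  refine ((hgauss.mul (hasDerivAt_physHermite n x)).div_const (2 ^ n)).congr_deriv ?_
  simp only [psiH, physHermite_succ n x]
  cases n with
  | zero => simp [physHermite]; ring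
  | succ m =>
    simp only [Nat.add_sub_cancel]
    push_cast
    field_simp
    ring

lemma hasDerivAt_kerGUE_left (N : ℕ) (x y : ℝ) :
    HasDerivAt (fun u => kerGUE N u y)
      (∑ n ∈ range N, (-psiH (n + 1) x + n / 2 * psiH (n - 1) x) * psiH n y / hermiteNormSq n) x := by
  simp only [kerGUE_eq_sum]
  exact HasDerivAt.fun_sum fun n _ => ((hasDerivAt_psiH n x).mul_const _).div_const _

noncomputable def gueBoundary (n : ℕ) (x y : ℝ) : ℝ :=
  (psiH (n + 1) x * psiH n y + psiH n x * psiH (n + 1) y) / hermiteNormSq n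

lemma sum_ladder_eq_neg_gueBoundary (M : ℕ) (x y : ℝ) :
    ∑ n ∈ range (M + 1),
        ((-psiH (n + 1) x + n / 2 * psiH (n - 1) x) * psiH n y / hermiteNormSq n +
          (-psiH (n + 1) y + n / 2 * psiH (n - 1) y) * psiH n x / hermiteNormSq n) =
      -gueBoundary M x y := by
  induction M with
  | zero =>
    simp only [zero_add, range_one, sum_singleton, gueBoundary]
    ring
  | succ M ih =>
    rw [sum_range_succ, ih]
    have hM := (hermiteNormSq_pos M).ne'
    simp only [gueBoundary, hermiteNormSq_succ, Nat.add_sub_cancel]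
    push_cast
    field_simp
    ring

lemma hermiteNormSq_eq_rpow (M : ℕ) :
    √π * (2 : ℝ) ^ (-((M + 1 : ℕ) : ℝ) + 1) * M.factorial = hermiteNormSq M := by
  have hexp : -((M + 1 : ℕ) : ℝ) + 1 = -(M : ℝ) := by push_cast; ring
  rw [hexp, rpow_neg zero_le_two, rpow_natCast, hermiteNormSq]
  ring

/-- `(∂_x + ∂_y) K_N(x,y) = -(1/(√π 2^{-N+1} (N-1)!)) (ψ_N(x)ψ_{N-1}(y) + ψ_{N-1}(x)ψ_N(y))`. -/
theorem stmt_10 (N : ℕ) (hN : 1 ≤ N) (x y : ℝ) :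
    deriv (fun u => kerGUE N u y) x + deriv (fun v => kerGUE N x v) y =
      -(1 / (Real.sqrt Real.pi * (2 : ℝ) ^ (-(N : ℝ) + 1) * (Nat.factorial (N - 1)))) *
        (psiH N x * psiH (N - 1) y + psiH (N - 1) x * psiH N y) := by
  obtain ⟨M, rfl⟩ : ∃ M, N = M + 1 := ⟨N - 1, by omega⟩
  have hswap : (fun v => kerGUE (M + 1) x v) = fun v => kerGUE (M + 1) v x :=
    funext fun v => kerGUE_comm _ x v
  rw [hswap, (hasDerivAt_kerGUE_left _ x y).deriv, (hasDerivAt_kerGUE_left _ y x).deriv,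
    ← sum_add_distrib, sum_ladder_eq_neg_gueBoundary, Nat.add_sub_cancel, hermiteNormSq_eq_rpow,
    gueBoundary]
  ring
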